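/- Let n ≥ 2 and let c be a real number. Define ℱ : ℝ^{2n} → ℝ^{2n} by ℱ(x)_j = tanh(x_{j−1}) + tanh(x_{j+1}) + c, where the indices j − 1 and j + 1 are taken modulo 2n. If c > 2 + log(2 + √3), then ℱ has a globally attracting fixed point (in the sup metric on ℝ^{2n}). -/

import Mathlib

/-!
Every coordinate of `ℱ(x)` exceeds `c - 2`, since `|tanh| < 1`, so one step of `ℱ` lands in the
closed orthant `S = [c - 2, ∞)^{2n}`. When `c - 2 > arcosh 2 = log (2 + √3)`, on `S` the slope
`tanh' = sech²` is at most `1/4`, so `ℱ` is a `1/2`-contraction of `S` in the sup metric. Banach's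
fixed-point theorem on the complete set `S` then gives a fixed point attracting every orbit.
-/

open Filter Topology Set Function NNReal

def IsGloballyAttractingFixedPt {α : Type*} [TopologicalSpace α] (f : α → α) (p : α) : Prop :=
  IsFixedPt f p ∧ ∀ x, Tendsto (fun k => f^[k] x) atTop (𝓝 p)

theorem exists_isGloballyAttractingFixedPt_of_lipschitzOnWith {α : Type*} [MetricSpace α]
    [Nonempty α] {f : α → α} {s : Set α} {K : ℝ≥0} (hK : K < 1) (hs : IsComplete s)
    (hfs : ∀ x, f x ∈ s) (hf : LipschitzOnWith K f s) :
    ∃ p, IsGloballyAttractingFixedPt f p := by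
  have hsf : MapsTo f s s := fun x _ => hfs x
  have hc : ContractingWith K (hsf.restrict f s s) := ⟨hK, hsf.lipschitzOnWith_iff_restrict.mp hf⟩
  obtain ⟨p, hps, hp, -⟩ :=
    hc.exists_fixedPoint' hs hsf (hfs (Classical.arbitrary α)) (edist_ne_top _ _)
  refine ⟨p, hp, fun x => ?_⟩
  obtain ⟨q, hqs, hq, hlim, -⟩ := hc.exists_fixedPoint' hs hsf (hfs x) (edist_ne_top _ _)
  have hqp : q = p := congrArg Subtype.val <|
    hc.fixedPoint_unique' (x := ⟨q, hqs⟩) (y := ⟨p, hps⟩) (Subtype.ext hq) (Subtype.ext hp)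
  rw [hqp] at hlim
  refine (tendsto_add_atTop_iff_nat 1).1 ?_
  simpa only [iterate_succ_apply] using hlim

namespace Real

theorem hasDerivAt_tanh (x : ℝ) : HasDerivAt tanh (cosh x ^ 2)⁻¹ x := by
  have h := (hasDerivAt_sinh x).div (hasDerivAt_cosh x) (cosh_pos x).ne'
  rw [show sinh / cosh = tanh from funext fun t => (tanh_eq_sinh_div_cosh t).symm] at h
  refine h.congr_deriv ?_
  rw [← sq, ← sq, cosh_sq_sub_sinh_sq, one_div]

theorem log_two_add_sqrt_three : log (2 + √3) = arcosh 2 := by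
  norm_num [arcosh]

theorem lipschitzOnWith_tanh_Ici {a : ℝ} {K : ℝ≥0} (ha : 0 ≤ a) (hK : (cosh a ^ 2)⁻¹ ≤ K) :
    LipschitzOnWith K tanh (Ici a) := by
  refine (convex_Ici a).lipschitzOnWith_of_nnnorm_hasDerivWithin_le
    (fun x _ => (hasDerivAt_tanh x).hasDerivWithinAt) fun x (hx : a ≤ x) => ?_
  have hcosh : cosh a ≤ cosh x := by
    rw [cosh_le_cosh, abs_of_nonneg ha, abs_of_nonneg (ha.trans hx)]
    exact hx
  rw [← NNReal.coe_le_coe, coe_nnnorm, norm_of_nonneg (by positivity)]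
  exact le_trans (by gcongr) hK

end Real

section TanhNeighborMap

variable {ι : Type*} (σ τ : ι → ι) (c : ℝ)

/-- The ring network of the theorem is the case `σ j = j - 1`, `τ j = j + 1` on `Fin (2 * n)`. -/
noncomputable def tanhNeighborMap (x : ι → ℝ) : ι → ℝ :=
  fun j => Real.tanh (x (σ j)) + Real.tanh (x (τ j)) + c

theorem sub_two_lt_tanhNeighborMap (x : ι → ℝ) (j : ι) : c - 2 < tanhNeighborMap σ τ c x j := by
  have := Real.neg_one_lt_tanh (x (σ j))
  have := Real.neg_one_lt_tanh (x (τ j))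
  simp only [tanhNeighborMap]
  linarith

variable [Fintype ι]

theorem lipschitzOnWith_tanhNeighborMap {a : ℝ} {K : ℝ≥0}
    (htanh : LipschitzOnWith K Real.tanh (Ici a)) :
    LipschitzOnWith (2 * K) (tanhNeighborMap σ τ c) (univ.pi fun _ => Ici a) := by
  refine LipschitzOnWith.of_dist_le_mul fun x hx y hy => ?_
  simp only [mem_univ_pi] at hx hy
  refine (dist_pi_le_iff (by positivity)).2 fun j => ?_
  have hsplit : dist (tanhNeighborMap σ τ c x j) (tanhNeighborMap σ τ c y j) ≤
      dist (Real.tanh (x (σ j))) (Real.tanh (y (σ j))) +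
        dist (Real.tanh (x (τ j))) (Real.tanh (y (τ j))) := by
    simp only [tanhNeighborMap, dist_add_right]
    exact dist_add_add_le _ _ _ _
  calc _ ≤ _ := hsplit
    _ ≤ K * dist (x (σ j)) (y (σ j)) + K * dist (x (τ j)) (y (τ j)) :=
      add_le_add (htanh.dist_le_mul _ (hx (σ j)) _ (hy (σ j)))
        (htanh.dist_le_mul _ (hx (τ j)) _ (hy (τ j)))
    _ ≤ K * dist x y + K * dist x y := by
      gcongr <;> exact dist_le_pi_dist x y _
    _ = ↑(2 * K) * dist x y := by
      push_cast
      ring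

theorem exists_isGloballyAttractingFixedPt_tanhNeighborMap (hc : 2 + Real.arcosh 2 < c) :
    ∃ p, IsGloballyAttractingFixedPt (tanhNeighborMap σ τ c) p := by
  have hcosh : Real.cosh (Real.arcosh 2) = 2 := Real.cosh_arcosh one_le_two
  have htanh : LipschitzOnWith 4⁻¹ Real.tanh (Ici (Real.arcosh 2)) :=
    Real.lipschitzOnWith_tanh_Ici (Real.arcosh_nonneg one_le_two) (by rw [hcosh]; norm_num)
  refine exists_isGloballyAttractingFixedPt_of_lipschitzOnWith (K := 2 * 4⁻¹) ?_
    (isClosed_set_pi fun _ _ => isClosed_Ici).isComplete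
    (fun x => mem_univ_pi.2 fun j => ?_) (lipschitzOnWith_tanhNeighborMap σ τ c htanh)
  · rw [← NNReal.coe_lt_coe]
    norm_num
  · exact mem_Ici.2 (by linarith [sub_two_lt_tanhNeighborMap σ τ c x j])

end TanhNeighborMap

/-- The network `ℱ(x)_j = tanh(x_{j−1}) + tanh(x_{j+1}) + c` on `ℝ^{2n}` (indices mod
`2n`) has a globally attracting fixed point whenever `c > 2 + log(2 + √3)`, i.e.
`c > 2 + sech⁻¹(1/2)`. -/
theorem ring_tanh_network_stability
    {n : ℕ} (hn : 2 ≤ n) (c : ℝ)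
    (hc : c > 2 + Real.log (2 + Real.sqrt 3)) :
    ∃ p : Fin (2 * n) → ℝ,
      (fun j => Real.tanh (p (j - ⟨1, by omega⟩)) + Real.tanh (p (j + ⟨1, by omega⟩)) + c)
        = p ∧
      ∀ x : Fin (2 * n) → ℝ,
        Tendsto
          (fun k =>
            (fun x : Fin (2 * n) → ℝ => fun j =>
              Real.tanh (x (j - ⟨1, by omega⟩)) + Real.tanh (x (j + ⟨1, by omega⟩)) + c)^[k] x)
          atTop (nhds p) := by
  rw [Real.log_two_add_sqrt_three] at hc
  obtain ⟨p, hfix, hattr⟩ := exists_isGloballyAttractingFixedPt_tanhNeighborMap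
    (fun j : Fin (2 * n) => j - ⟨1, by omega⟩) (fun j => j + ⟨1, by omega⟩) c hc
  exact ⟨p, hfix, hattr⟩
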